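/- Let (Ω, ρ_Ω) and (Λ, ρ_Λ) be metric spaces, L ≥ 1, K, θ > 0, let A, U ⊆ Ω, and let g : A ∪ U → Λ be a mapping such that: (a) g restricted to A and g restricted to U are both L-bilipschitz; (b) for every a ∈ A one has inf_{u∈U} ρ_Ω(a, u) ≥ 1/2 and there exists a′ ∈ U with ρ_Λ(g(a), g(a′)) ≤ K and ρ_Ω(a, a′) ≤ 1; (c) ρ_Λ(g(a), g(u)) ≥ θ for all a ∈ A and u ∈ U. Then g is injective, g is (3L + 2K)-Lipschitz, and its inverse (on the image) is L·(1 + (K+1)/θ)-Lipschitz. -/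
import Mathlib


noncomputable section

/-- `g` is `L`-bilipschitz on the set `s`. -/
def IsBilipOn {α β : Type*} [PseudoMetricSpace α] [PseudoMetricSpace β]
    (L : ℝ) (g : α → β) (s : Set α) : Prop :=
  ∀ x ∈ s, ∀ y ∈ s,
    (1 / L) * dist x y ≤ dist (g x) (g y) ∧ dist (g x) (g y) ≤ L * dist x y

theorem stmt5 {Ω Λ : Type*} [MetricSpace Ω] [MetricSpace Λ]
    (L K θ : ℝ) (hL : 1 ≤ L) (hK : 0 < K) (hθ : 0 < θ)
    (A U : Set Ω) (g : Ω → Λ)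
    (hA : IsBilipOn L g A) (hU : IsBilipOn L g U)
    (hapart : ∀ a ∈ A, ∀ u ∈ U, (1 : ℝ) / 2 ≤ dist a u)
    (hjump : ∀ a ∈ A, ∃ a' ∈ U, dist (g a) (g a') ≤ K ∧ dist a a' ≤ 1)
    (hθsep : ∀ a ∈ A, ∀ u ∈ U, θ ≤ dist (g a) (g u)) :
    Set.InjOn g (A ∪ U) ∧
    (∀ x ∈ A ∪ U, ∀ y ∈ A ∪ U, dist (g x) (g y) ≤ (3 * L + 2 * K) * dist x y) ∧
    (∀ x ∈ A ∪ U, ∀ y ∈ A ∪ U,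
      dist x y ≤ L * (1 + (K + 1) / θ) * dist (g x) (g y)) := by
  have hL0 : (0:ℝ) < L := lt_of_lt_of_le one_pos hL
  -- cross case for Lipschitz bound
  have key2 : ∀ x ∈ A, ∀ y ∈ U, dist (g x) (g y) ≤ (3 * L + 2 * K) * dist x y := by
    intro x hx y hy
    obtain ⟨a', ha'U, hgK, hd1⟩ := hjump x hx
    have h1 : dist (g a') (g y) ≤ L * dist a' y := (hU a' ha'U y hy).2
    have h2 : dist a' y ≤ dist a' x + dist x y := dist_triangle a' x y
    have h3 : dist a' x ≤ 1 := by rw [dist_comm]; exact hd1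
    have h4 : dist (g x) (g y) ≤ dist (g x) (g a') + dist (g a') (g y) := dist_triangle _ _ _
    have h5 : (1:ℝ)/2 ≤ dist x y := hapart x hx y hy
    nlinarith [dist_nonneg (x := a') (y := y)]
  -- cross case for inverse Lipschitz bound
  have key3 : ∀ x ∈ A, ∀ y ∈ U, dist x y ≤ L * (1 + (K + 1) / θ) * dist (g x) (g y) := by
    intro x hx y hy
    obtain ⟨a', ha'U, hgK, hd1⟩ := hjump x hx
    set d := dist (g x) (g y) with hd
    have hdθ : θ ≤ d := hθsep x hx y hy
    have h1 : (1/L) * dist a' y ≤ dist (g a') (g y) := (hU a' ha'U y hy).1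
    have h2 : dist (g a') (g y) ≤ dist (g a') (g x) + d := dist_triangle _ _ _
    have h3 : dist (g a') (g x) ≤ K := by rw [dist_comm]; exact hgK
    have h4 : dist x y ≤ dist x a' + dist a' y := dist_triangle x a' y
    have h5 : dist a' y ≤ L * (K + d) := by
      calc dist a' y = L * ((1/L) * dist a' y) := by field_simp
        _ ≤ L * (K + d) := mul_le_mul_of_nonneg_left (h1.trans (by linarith)) hL0.le
    have hdiv : 1 ≤ d / θ := (one_le_div hθ).2 hdθ
    have hexp : L * (1 + (K + 1) / θ) * d = L * d + (L * (K+1)) * (d / θ) := by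
      field_simp
    rw [hexp]
    nlinarith [mul_le_mul_of_nonneg_left hdiv (by positivity : (0:ℝ) ≤ L * (K+1))]
  have hinv : ∀ x ∈ A ∪ U, ∀ y ∈ A ∪ U,
      dist x y ≤ L * (1 + (K + 1) / θ) * dist (g x) (g y) := by
    have hCL : L ≤ L * (1 + (K + 1) / θ) := by
      have : (0:ℝ) ≤ (K+1)/θ := by positivity
      nlinarith
    have same : ∀ x y : Ω, (1/L) * dist x y ≤ dist (g x) (g y) →
        dist x y ≤ L * (1 + (K + 1) / θ) * dist (g x) (g y) := by
      intro x y h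
      have h' : dist x y ≤ L * dist (g x) (g y) := by
        have := mul_le_mul_of_nonneg_left h hL0.le
        calc dist x y = L * ((1/L) * dist x y) := by field_simp
          _ ≤ L * dist (g x) (g y) := this
      have := mul_le_mul_of_nonneg_right hCL (dist_nonneg (x := g x) (y := g y))
      linarith
    intro x hx y hy
    rcases hx with hx | hx <;> rcases hy with hy | hy
    · exact same x y (hA x hx y hy).1
    · exact key3 x hx y hy
    · rw [dist_comm, dist_comm (g x)]; exact key3 y hy x hx
    · exact same x y (hU x hx y hy).1
  refine ⟨?_, ?_, hinv⟩
  · intro x hx y hy hgxy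
    have := hinv x hx y hy
    rw [hgxy, dist_self, mul_zero] at this
    exact dist_le_zero.1 this
  · intro x hx y hy
    have hCK : L ≤ 3 * L + 2 * K := by nlinarith
    have same : ∀ x y : Ω, dist (g x) (g y) ≤ L * dist x y →
        dist (g x) (g y) ≤ (3 * L + 2 * K) * dist x y := by
      intro x y h
      have := mul_le_mul_of_nonneg_right hCK (dist_nonneg (x := x) (y := y))
      linarith
    rcases hx with hx | hx <;> rcases hy with hy | hy
    · exact same x y (hA x hx y hy).2
    · exact key2 x hx y hy
    · rw [dist_comm, dist_comm x]; exact key2 y hy x hx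
    · exact same x y (hU x hx y hy).2

end
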